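/- For all real c > 0 and X ∈ ℝ, the improper integral converges and ∫_X^∞ ( 1 − 2 e^{x/2} F(e^{x/2}) ) e^{x/2 − c eˣ} dx = √π · (√c/(c+1)) · erfc(√c · e^{X/2}) − (2/(c+1)) · e^{−c e^X} · F(e^{X/2}). -/

import Mathlib

open MeasureTheory

/-- The Dawson function `F(x) = e^{−x²} ∫₀ˣ e^{t²} dt`. -/
noncomputable def dawson (x : ℝ) : ℝ := Real.exp (-x ^ 2) * ∫ t in (0 : ℝ)..x, Real.exp (t ^ 2)

/-- The error function `erf(x) = (2/√π) ∫₀ˣ e^{−t²} dt`. -/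
noncomputable def erf (x : ℝ) : ℝ := 2 / Real.sqrt Real.pi * ∫ t in (0 : ℝ)..x, Real.exp (-t ^ 2)

/-- The complementary error function. -/
noncomputable def erfc (x : ℝ) : ℝ := 1 - erf x

/-!
With `u = e^{x/2}`, the Dawson equation `F'(u) = 1 - 2uF(u)` and `erf'(u) = (2/√π) e^{-u²}` show by
differentiation that `upperTailPrimitive c` is an antiderivative of the integrand, so the tail
integral is its limit at `+∞` minus its value at `X`. The limit is `√π √c/(c+1)`, because
`0 ≤ F(u) ≤ u` bounds `e^{-c eˣ} F(u)` by `e^{x/2 - c eˣ} → 0`. Integrability comes from writing the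
integrand as `g - 2uF(u) g` with `g = e^{x/2 - c eˣ}`: both terms are nonnegative derivatives of
functions with finite limits at `+∞`.
-/

open MeasureTheory Real Filter Topology Set

theorem integrableOn_Ioi_deriv_of_le_of_nonneg {f g F G : ℝ → ℝ} {a l m : ℝ}
    (hF : ∀ x ∈ Ici a, HasDerivAt F (f x) x) (hG : ∀ x ∈ Ici a, HasDerivAt G (g x) x)
    (hfg : ∀ x ∈ Ioi a, f x ≤ g x) (hg : ∀ x ∈ Ioi a, 0 ≤ g x)
    (hFl : Tendsto F atTop (𝓝 l)) (hGl : Tendsto G atTop (𝓝 m)) :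
    IntegrableOn f (Ioi a) := by
  have hg_int : IntegrableOn g (Ioi a) := integrableOn_Ioi_deriv_of_nonneg' hG hg hGl
  have hgf_int : IntegrableOn (fun x => g x - f x) (Ioi a) :=
    integrableOn_Ioi_deriv_of_nonneg' (fun x hx => (hG x hx).sub (hF x hx))
      (fun x hx => sub_nonneg.2 (hfg x hx)) (hGl.sub hFl)
  exact (hg_int.sub hgf_int).congr_fun (fun x _ => sub_sub_cancel _ _) measurableSet_Ioi

lemma hasDerivAt_dawson (x : ℝ) : HasDerivAt dawson (1 - 2 * x * dawson x) x := by
  have hI : HasDerivAt (fun u => ∫ t in (0 : ℝ)..u, exp (t ^ 2)) (exp (x ^ 2)) x :=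
    ((continuous_pow 2).rexp.integral_hasStrictDerivAt 0 x).hasDerivAt
  have hE : HasDerivAt (fun u => exp (-u ^ 2)) (exp (-x ^ 2) * -(2 * x)) x := by
    simpa using ((hasDerivAt_pow 2 x).neg).exp
  refine (hE.mul hI).congr_deriv ?_
  rw [dawson, ← exp_add, neg_add_cancel, exp_zero]
  ring

lemma dawson_nonneg {x : ℝ} (hx : 0 ≤ x) : 0 ≤ dawson x :=
  mul_nonneg (exp_pos _).le (intervalIntegral.integral_nonneg hx fun _ _ => (exp_pos _).le)

lemma dawson_le_self {x : ℝ} (hx : 0 ≤ x) : dawson x ≤ x := by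
  have hmono : ∫ t in (0 : ℝ)..x, exp (t ^ 2) ≤ ∫ _ in (0 : ℝ)..x, exp (x ^ 2) :=
    intervalIntegral.integral_mono_on hx ((continuous_pow 2).rexp.intervalIntegrable 0 x)
      intervalIntegrable_const fun t ht => exp_le_exp.2 (pow_le_pow_left₀ ht.1 ht.2 2)
  calc dawson x ≤ exp (-x ^ 2) * ∫ _ in (0 : ℝ)..x, exp (x ^ 2) :=
        mul_le_mul_of_nonneg_left hmono (exp_pos _).le
    _ = x := by
        rw [intervalIntegral.integral_const, smul_eq_mul, sub_zero, mul_left_comm, ← exp_add,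
          neg_add_cancel, exp_zero, mul_one]

lemma hasDerivAt_erf (x : ℝ) : HasDerivAt erf (2 / √π * exp (-x ^ 2)) x :=
  ((continuous_pow 2).neg.rexp.integral_hasStrictDerivAt 0 x).hasDerivAt.const_mul _

lemma tendsto_erf_atTop : Tendsto erf atTop (𝓝 1) := by
  have hint : IntegrableOn (fun t : ℝ => exp (-t ^ 2)) (Ioi 0) := by
    simpa using (integrable_exp_neg_mul_sq one_pos).integrableOn (s := Ioi (0 : ℝ))
  have hval : ∫ t in Ioi (0 : ℝ), exp (-t ^ 2) = √π / 2 := by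
    simpa using integral_gaussian_Ioi 1
  have h := (intervalIntegral_tendsto_integral_Ioi 0 hint tendsto_id).const_mul (2 / √π)
  have h1 : 2 / √π * (√π / 2) = 1 := by field_simp
  rwa [hval, h1] at h

lemma hasDerivAt_exp_half (x : ℝ) : HasDerivAt (fun x => exp (x / 2)) (exp (x / 2) / 2) x := by
  simpa [mul_comm, div_eq_mul_inv] using ((hasDerivAt_id x).div_const 2).exp

lemma exp_half_mul_exp_half (x : ℝ) : exp (x / 2) * exp (x / 2) = exp x := by
  rw [← exp_add, add_halves]

lemma exp_half_sub_mul_exp (c x : ℝ) :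
    exp (x / 2 - c * exp x) = exp (x / 2) * exp (-(c * exp x)) := by
  rw [sub_eq_add_neg, exp_add]

noncomputable def upperTailPrimitive (c x : ℝ) : ℝ :=
  2 / (c + 1) * exp (-(c * exp x)) * dawson (exp (x / 2))
    + √π * (√c / (c + 1)) * erf (√c * exp (x / 2))

section UpperTail

variable {c : ℝ}

lemma hasDerivAt_erf_sqrt_mul_exp_half (hc : 0 < c) (x : ℝ) :
    HasDerivAt (fun x => √π / √c * erf (√c * exp (x / 2))) (exp (x / 2 - c * exp x)) x := by
  have h := ((hasDerivAt_erf _).comp x ((hasDerivAt_exp_half x).const_mul √c)).const_mul (√π / √c)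
  refine h.congr_deriv ?_
  have hsq : (√c * exp (x / 2)) ^ 2 = c * exp x := by
    rw [mul_pow, sq_sqrt hc.le, sq, exp_half_mul_exp_half]
  rw [hsq, exp_half_sub_mul_exp]
  field_simp

lemma hasDerivAt_upperTailPrimitive (hc : 0 < c) (x : ℝ) :
    HasDerivAt (upperTailPrimitive c)
      ((1 - 2 * exp (x / 2) * dawson (exp (x / 2))) * exp (x / 2 - c * exp x)) x := by
  have hE : HasDerivAt (fun x => exp (-(c * exp x))) (exp (-(c * exp x)) * -(c * exp x)) x :=
    ((hasDerivAt_exp x).const_mul c).neg.exp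
  have hF : HasDerivAt (fun x => dawson (exp (x / 2)))
      ((1 - 2 * exp (x / 2) * dawson (exp (x / 2))) * (exp (x / 2) / 2)) x :=
    (hasDerivAt_dawson _).comp x (hasDerivAt_exp_half x)
  have hH := hasDerivAt_erf_sqrt_mul_exp_half hc x
  -- the `erf` term of the primitive is `c / (c + 1)` times the primitive of `e^{x/2 - c eˣ}`
  have hcoef : √π * (√c / (c + 1)) = c / (c + 1) * (√π / √c) := by
    field_simp
    rw [sq_sqrt hc.le]
  have h := ((hE.const_mul (2 / (c + 1))).mul hF).add (hH.const_mul (c / (c + 1)))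
  refine (h.congr_deriv ?_).congr_of_eventuallyEq (.of_forall fun y => ?_)
  · rw [exp_half_sub_mul_exp, ← exp_half_mul_exp_half x]
    field_simp
    ring
  · simp only [upperTailPrimitive, hcoef, Pi.add_apply, Pi.mul_apply]
    ring

lemma tendsto_exp_half_sub_mul_exp (hc : 0 < c) :
    Tendsto (fun x => exp (x / 2 - c * exp x)) atTop (𝓝 0) := by
  have hlin : Tendsto (fun x => x * exp (-x) / 2 - c) atTop (𝓝 (-c)) := by
    simpa using ((tendsto_pow_mul_exp_neg_atTop_nhds_zero 1).div_const 2).sub_const c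
  refine tendsto_exp_atBot.comp
    ((tendsto_exp_atTop.atTop_mul_neg (neg_neg_of_pos hc) hlin).congr fun x => ?_)
  rw [exp_neg]
  field_simp

lemma tendsto_exp_neg_mul_exp_mul_dawson (hc : 0 < c) :
    Tendsto (fun x => exp (-(c * exp x)) * dawson (exp (x / 2))) atTop (𝓝 0) := by
  refine squeeze_zero (fun x => mul_nonneg (exp_pos _).le (dawson_nonneg (exp_pos _).le))
    (fun x => ?_) (tendsto_exp_half_sub_mul_exp hc)
  rw [exp_half_sub_mul_exp, mul_comm (exp (x / 2))]
  exact mul_le_mul_of_nonneg_left (dawson_le_self (exp_pos _).le) (exp_pos _).le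

lemma tendsto_erf_sqrt_mul_exp_half (hc : 0 < c) :
    Tendsto (fun x => erf (√c * exp (x / 2))) atTop (𝓝 1) :=
  tendsto_erf_atTop.comp <| (tendsto_exp_atTop.comp (tendsto_id.atTop_div_const two_pos)).const_mul_atTop
    (sqrt_pos.2 hc)

lemma tendsto_upperTailPrimitive (hc : 0 < c) :
    Tendsto (upperTailPrimitive c) atTop (𝓝 (√π * (√c / (c + 1)))) := by
  have h := ((tendsto_exp_neg_mul_exp_mul_dawson hc).const_mul (2 / (c + 1))).add
    ((tendsto_erf_sqrt_mul_exp_half hc).const_mul (√π * (√c / (c + 1))))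
  simp only [mul_zero, zero_add, mul_one] at h
  exact h.congr fun x => by rw [upperTailPrimitive, mul_assoc (2 / (c + 1))]

end UpperTail

/-- upper-tail integral identity for all `c > 0`, `X ∈ ℝ`. -/
theorem upper_tail_integral (c X : ℝ) (hc : 0 < c) :
    IntegrableOn
      (fun x : ℝ => (1 - 2 * Real.exp (x / 2) * dawson (Real.exp (x / 2))) *
        Real.exp (x / 2 - c * Real.exp x)) (Set.Ioi X) ∧
      ∫ x in Set.Ioi X, (1 - 2 * Real.exp (x / 2) * dawson (Real.exp (x / 2))) *
          Real.exp (x / 2 - c * Real.exp x)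
        = Real.sqrt Real.pi * (Real.sqrt c / (c + 1)) * erfc (Real.sqrt c * Real.exp (X / 2))
            - 2 / (c + 1) * Real.exp (-(c * Real.exp X)) * dawson (Real.exp (X / 2)) := by
  have hG : ∀ x ∈ Ici X, HasDerivAt (upperTailPrimitive c)
      ((1 - 2 * exp (x / 2) * dawson (exp (x / 2))) * exp (x / 2 - c * exp x)) x :=
    fun x _ => hasDerivAt_upperTailPrimitive hc x
  have hle : ∀ x ∈ Ioi X, (1 - 2 * exp (x / 2) * dawson (exp (x / 2))) * exp (x / 2 - c * exp x)
      ≤ exp (x / 2 - c * exp x) := fun x _ =>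
    mul_le_of_le_one_left (exp_pos _).le
      (sub_le_self _ (mul_nonneg (by positivity) (dawson_nonneg (exp_pos _).le)))
  have hint := integrableOn_Ioi_deriv_of_le_of_nonneg hG
    (fun x _ => hasDerivAt_erf_sqrt_mul_exp_half hc x) hle (fun x _ => (exp_pos _).le)
    (tendsto_upperTailPrimitive hc) ((tendsto_erf_sqrt_mul_exp_half hc).const_mul _)
  refine ⟨hint, ?_⟩
  rw [integral_Ioi_of_hasDerivAt_of_tendsto' hG hint (tendsto_upperTailPrimitive hc),
    upperTailPrimitive, erfc]
  ring
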